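/- arXiv:2510.03303 — 2 statements merged into one kernel-verified Lean document; each statement's English description precedes it below -/
import Mathlib

section
/- For the ReLU activation σ(s) = max(s, 0), given N distinct points x_1, ..., x_N ∈ ℝ^d, there exist vectors a ∈ ℝ^d and scalars b_1 > b_2 > ... > b_N such that the N × N matrix M with entries M_{ij} = σ(⟨a, x_i⟩ + b_j) (after relabeling the x_i so that ⟨a, x_1⟩ < ⟨a, x_2⟩ < ... < ⟨a, x_N⟩) is lower triangular with strictly positive diagonal entries, and hence invertible. -/
open scoped RealInnerProductSpace BigOperators

/-- ReLU activation function. -/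
noncomputable def relu (s : ℝ) : ℝ := max s 0

lemma exists_separating (d N : ℕ) (x : Fin N → EuclideanSpace ℝ (Fin d))
    (hx : Function.Injective x) :
    ∃ a : EuclideanSpace ℝ (Fin d), Function.Injective fun i => ⟪a, x i⟫ := by
  by_contra h
  push_neg at h
  set ι := {p : Fin N × Fin N // p.1 ≠ p.2}
  have : Finite ι := inferInstance
  set K : ι → Subspace ℝ (EuclideanSpace ℝ (Fin d)) :=
    fun p => LinearMap.ker ((innerSL ℝ (x p.1.1 - x p.1.2)).toLinearMap)
  have hcov : ⋃ i, (K i : Set (EuclideanSpace ℝ (Fin d))) = Set.univ := by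
    ext a
    simp only [Set.mem_iUnion, Set.mem_univ, iff_true]
    obtain ⟨i, j, hij, hne⟩ := Function.not_injective_iff.mp (h a)
    refine ⟨⟨(i, j), hne⟩, ?_⟩
    simp only [K, SetLike.mem_coe, LinearMap.mem_ker, ContinuousLinearMap.coe_coe, innerSL_apply_apply,
      inner_sub_left]
    have h1 : ⟪x i, a⟫ = ⟪a, x i⟫ := real_inner_comm _ _
    have h2 : ⟪x j, a⟫ = ⟪a, x j⟫ := real_inner_comm _ _
    rw [h1, h2, hij, sub_self]
  obtain ⟨p, hp⟩ := Subspace.exists_eq_top_of_iUnion_eq_univ hcov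
  have : x p.1.1 - x p.1.2 ∈ K p := hp ▸ Submodule.mem_top
  simp only [K, LinearMap.mem_ker, ContinuousLinearMap.coe_coe, innerSL_apply_apply] at this
  have := inner_self_eq_zero.mp this
  exact p.2 (hx (sub_eq_zero.mp this))

set_option maxHeartbeats 1000000 in
theorem relu_interpolation_matrix_lower_triangular
    (d N : ℕ) (x : Fin N → EuclideanSpace ℝ (Fin d))
    (hx : Function.Injective x) :
    ∃ (e : Equiv.Perm (Fin N)) (a : EuclideanSpace ℝ (Fin d)) (b : Fin N → ℝ),
      StrictAnti b ∧
      StrictMono (fun i : Fin N => ⟪a, x (e i)⟫) ∧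
      (∀ i j : Fin N, i < j →
        (Matrix.of fun i j : Fin N => relu (⟪a, x (e i)⟫ + b j)) i j = 0) ∧
      (∀ i : Fin N,
        0 < (Matrix.of fun i j : Fin N => relu (⟪a, x (e i)⟫ + b j)) i i) ∧
      IsUnit (Matrix.of fun i j : Fin N => relu (⟪a, x (e i)⟫ + b j)) := by
  obtain ⟨a, ha⟩ := exists_separating d N x hx
  set f : Fin N → ℝ := fun i => ⟪a, x i⟫ with hf
  set e : Equiv.Perm (Fin N) := Tuple.sort f with he
  have hmono : Monotone (f ∘ e) := Tuple.monotone_sort f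
  have hinj : Function.Injective (f ∘ e) := ha.comp e.injective
  have hsm : StrictMono (f ∘ e) := hmono.strictMono_of_injective hinj
  set c : Fin N → ℝ := f ∘ e with hc
  -- choose ε
  set P : Finset (Fin N × Fin N) := Finset.univ.filter fun p => p.1 < p.2 with hP
  set ε : ℝ := if h : P.Nonempty then (P.inf' h fun p => c p.2 - c p.1) / 2 else 1 with hε
  have hgap : ∀ p ∈ P, 0 < c p.2 - c p.1 := by
    intro p hp
    rw [hP, Finset.mem_filter] at hp
    have := hsm hp.2
    linarith
  have hεpos : 0 < ε := by
    rw [hε]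
    split_ifs with h
    · have := (Finset.lt_inf'_iff h (f := fun p => c p.2 - c p.1) (a := 0)).mpr hgap
      linarith
    · norm_num
  have hlt : ∀ i j : Fin N, i < j → ε < c j - c i := by
    intro i j hij
    have hmem : (i, j) ∈ P := Finset.mem_filter.mpr ⟨Finset.mem_univ _, hij⟩
    have hpos : 0 < c j - c i := hgap (i, j) hmem
    rw [hε]
    split_ifs with h
    · have hle : (P.inf' h fun p => c p.2 - c p.1) ≤ c (i, j).2 - c (i, j).1 :=
        Finset.inf'_le _ hmem
      simp only at hle
      linarith
    · exact absurd ⟨(i, j), hmem⟩ h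
  refine ⟨e, a, fun j => -c j + ε, ?_, ?_, ?_, ?_, ?_⟩
  · intro i j hij
    have := hsm hij
    simp only []
    linarith
  · exact hsm
  · intro i j hij
    have := hlt i j hij
    simp only [Matrix.of_apply, relu]
    have : (c i) + (-c j + ε) ≤ 0 := by linarith
    exact max_eq_right this
  · intro i
    show 0 < relu (c i + (-c i + ε))
    have h1 : (c i) + (-c i + ε) = ε := by ring
    rw [h1]
    simpa [relu] using hεpos
  · -- lower triangular with positive diagonal is invertible
    set M : Matrix (Fin N) (Fin N) ℝ :=
      Matrix.of fun i j : Fin N => relu (⟪a, x (e i)⟫ + (-c j + ε)) with hM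
    have htri : M.BlockTriangular OrderDual.toDual := by
      intro i j hij
      have hij' : i < j := hij
      have := hlt i j hij'
      simp only [hM, Matrix.of_apply, relu]
      exact max_eq_right (by change c i + (-c j + ε) ≤ 0; linarith)
    have hdet : M.det = ∏ i, M i i := Matrix.det_of_lowerTriangular M htri
    have hdiag : ∀ i, M i i = ε := by
      intro i
      simp only [hM, Matrix.of_apply, relu]
      have : c i + (-c i + ε) = ε := by ring
      show relu (c i + (-c i + ε)) = ε
      rw [show c i + (-c i + ε) = ε from this]
      exact max_eq_left hεpos.le
    have : M.det ≠ 0 := by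
      rw [hdet]
      simp only [hdiag, Finset.prod_const]
      exact pow_ne_zero _ (ne_of_gt hεpos)
    exact (Matrix.isUnit_iff_isUnit_det M).mpr (isUnit_iff_ne_zero.mpr this)
end

section
/- Let A ∈ ℝ^{d×d} be symmetric positive definite and consider hardmax self-attention dynamics with attention sets C_i(k) = argmax_{ℓ ∈ [n]} ⟨z_ℓ(k), A z_i(k)⟩. Then for every token i and layer k, every attracting token z_ℓ(k) with ℓ ∈ C_i(k) lies in the closed half-space H_i = {z : ⟨A z_i(k), z − z_i(k)⟩ ≥ 0}, and consequently the A-norm is non-decreasing along the dynamics: ⟨z_i(k+1), A z_i(k+1)⟩ ≥ ⟨z_i(k), A z_i(k)⟩. -/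
open scoped BigOperators RealInnerProductSpace

/-- In hardmax self-attention dynamics with `A` symmetric positive definite,
attracting tokens lie in the closed half-space `{z : ⟨A z_i, z - z_i⟩ ≥ 0}`,
and consequently the `A`-quadratic form of each token is non-decreasing. -/
theorem hardmax_attention_A_norm_nondecreasing
    (d n : ℕ) (hn : 0 < n) (α : ℝ) (hα : 0 < α)
    (A : EuclideanSpace ℝ (Fin d) →ₗ[ℝ] EuclideanSpace ℝ (Fin d))
    (hA_symm : ∀ x y : EuclideanSpace ℝ (Fin d), ⟪A x, y⟫ = ⟪x, A y⟫)
    (hA_pos : ∀ x : EuclideanSpace ℝ (Fin d), x ≠ 0 → 0 < ⟪x, A x⟫)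
    (z : ℕ → Fin n → EuclideanSpace ℝ (Fin d))
    (C : ℕ → Fin n → Finset (Fin n))
    (hC : ∀ (k : ℕ) (i ℓ : Fin n), ℓ ∈ C k i ↔
        ∀ m : Fin n, ⟪z k m, A (z k i)⟫ ≤ ⟪z k ℓ, A (z k i)⟫)
    (hupd : ∀ (k : ℕ) (i : Fin n),
        z (k + 1) i = z k i +
          (α / (1 + α)) • (((C k i).card : ℝ)⁻¹ •
            ∑ ℓ ∈ C k i, (z k ℓ - z k i))) :
    (∀ (k : ℕ) (i : Fin n), ∀ ℓ ∈ C k i,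
        0 ≤ ⟪A (z k i), z k ℓ - z k i⟫) ∧
    (∀ (k : ℕ) (i : Fin n),
        ⟪z k i, A (z k i)⟫ ≤ ⟪z (k + 1) i, A (z (k + 1) i)⟫) := by
  have half : ∀ (k : ℕ) (i : Fin n), ∀ ℓ ∈ C k i,
      0 ≤ ⟪A (z k i), z k ℓ - z k i⟫ := by
    intro k i ℓ hℓ
    have h := (hC k i ℓ).mp hℓ i
    rw [real_inner_comm, inner_sub_left]
    linarith
  refine ⟨half, ?_⟩
  intro k i
  set c : ℝ := α / (1 + α) with hc
  have hcpos : 0 < c := div_pos hα (by linarith)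
  obtain ⟨w, hw⟩ : ∃ w : EuclideanSpace ℝ (Fin d),
      w = ((C k i).card : ℝ)⁻¹ • ∑ ℓ ∈ C k i, (z k ℓ - z k i) := ⟨_, rfl⟩
  have hwz : 0 ≤ ⟪w, A (z k i)⟫ := by
    rw [hw, inner_smul_left, sum_inner]
    apply mul_nonneg (by simp)
    apply Finset.sum_nonneg
    intro ℓ hℓ
    rw [real_inner_comm]
    exact half k i ℓ hℓ
  have hww : 0 ≤ ⟪w, A w⟫ := by
    by_cases h : w = 0
    · simp [h]
    · exact le_of_lt (hA_pos w h)
  rw [hupd k i, ← hw]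
  clear hw
  have expand :
      ⟪z k i + c • w, A (z k i + c • w)⟫
        = ⟪z k i, A (z k i)⟫ + 2 * c * ⟪w, A (z k i)⟫ + c^2 * ⟪w, A w⟫ := by
    have h1 : ⟪z k i, A w⟫ = ⟪w, A (z k i)⟫ := by
      rw [← hA_symm, real_inner_comm]
    simp only [map_add, map_smul, inner_add_left, inner_add_right,
      real_inner_smul_left, real_inner_smul_right, h1]
    ring
  rw [expand]
  nlinarith [mul_nonneg (le_of_lt hcpos) hwz,
    mul_nonneg (mul_nonneg (le_of_lt hcpos) (le_of_lt hcpos)) hww]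
end
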